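/- Monotonicity of the DI coherence measure under left composition with a DI channel: if f is weakly monotone, then for any channel N and any DI channel Φ, C_f^{DI}(Φ ∘ N) ≤ C_f^{DI}(N), where C_f^{DI}(N) = inf over DI channels K of f(Δ∘N, Δ∘K). Key step: Δ∘Φ∘N = Δ∘Φ∘Δ∘N for DI Φ, so the comparison reduces to post-composition with the channel Δ∘Φ∘Δ. -/

import Mathlib

open Matrix ComplexOrder

noncomputable section

/-- The completely dephasing operator in the standard basis of `Fin d`. -/
def deph (d : ℕ) : Matrix (Fin d) (Fin d) ℂ →ₗ[ℂ] Matrix (Fin d) (Fin d) ℂ where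
  toFun ρ := Matrix.of fun i j => if i = j then ρ i j else 0
  map_add' x y := by
    ext i j
    by_cases h : i = j <;> simp [h]
  map_smul' c x := by
    ext i j
    by_cases h : i = j <;> simp [h]

/-- The Choi matrix of a linear map between matrix algebras. -/
def choi {ι κ : Type} [Fintype ι] [DecidableEq ι] [Fintype κ]
    (N : Matrix ι ι ℂ →ₗ[ℂ] Matrix κ κ ℂ) : Matrix (ι × κ) (ι × κ) ℂ :=
  Matrix.of fun p q => N (Matrix.single p.1 q.1 1) p.2 q.2

/-- A quantum channel: completely positive (PSD Choi matrix) and trace preserving. -/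
def IsChannel {ι κ : Type} [Fintype ι] [DecidableEq ι] [Fintype κ]
    (N : Matrix ι ι ℂ →ₗ[ℂ] Matrix κ κ ℂ) : Prop :=
  (choi N).PosSemidef ∧ ∀ ρ : Matrix ι ι ℂ, (N ρ).trace = ρ.trace

/-- A quantum state (density matrix). -/
def IsState {ι : Type} [Fintype ι] (ρ : Matrix ι ι ℂ) : Prop :=
  ρ.PosSemidef ∧ ρ.trace = 1

/-- Trace norm of a matrix: `Tr √(XᴴX)`. -/
def traceNorm {ι : Type} [Fintype ι] [DecidableEq ι] (X : Matrix ι ι ℂ) : ℝ :=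
  let hA := Matrix.posSemidef_conjTranspose_mul_self X
  ((hA.1.eigenvectorUnitary : Matrix ι ι ℂ) *
      Matrix.diagonal (fun i => ((Real.sqrt (hA.1.eigenvalues i) : ℝ) : ℂ)) *
      (star hA.1.eigenvectorUnitary : Matrix ι ι ℂ)).trace.re

/-- `N ⊗ I_R` acting on matrices over `ι × Fin r`. -/
def tensorId {ι κ : Type} [Fintype ι] [DecidableEq ι]
    (N : Matrix ι ι ℂ → Matrix κ κ ℂ) (r : ℕ)
    (X : Matrix (ι × Fin r) (ι × Fin r) ℂ) : Matrix (κ × Fin r) (κ × Fin r) ℂ :=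
  Matrix.of fun p q =>
    ∑ a₁ : ι, ∑ a₂ : ι, N (Matrix.single a₁ a₂ 1) p.1 q.1 * X (a₁, p.2) (a₂, q.2)


variable (f : ∀ (m k : ℕ),
  (Matrix (Fin m) (Fin m) ℂ →ₗ[ℂ] Matrix (Fin k) (Fin k) ℂ) →
  (Matrix (Fin m) (Fin m) ℂ →ₗ[ℂ] Matrix (Fin k) (Fin k) ℂ) → ℝ)

/-- The DI coherence measure: infimum distance (after dephasing) to DI channels. -/
def CDI (m k : ℕ) (N : Matrix (Fin m) (Fin m) ℂ →ₗ[ℂ] Matrix (Fin k) (Fin k) ℂ) : ℝ :=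
  sInf {x : ℝ | ∃ K, IsChannel K ∧ (deph k ∘ₗ K = deph k ∘ₗ K ∘ₗ deph m) ∧
    x = f m k (deph k ∘ₗ N) (deph k ∘ₗ K)}

/-- The CI coherence measure: infimum distance (with pre-dephasing) to CI channels. -/
def CCI (m k : ℕ) (N : Matrix (Fin m) (Fin m) ℂ →ₗ[ℂ] Matrix (Fin k) (Fin k) ℂ) : ℝ :=
  sInf {x : ℝ | ∃ K, IsChannel K ∧ (K ∘ₗ deph m = deph k ∘ₗ K ∘ₗ deph m) ∧
    x = f m k (N ∘ₗ deph m) (K ∘ₗ deph m)}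

/-- The DCI coherence measure: infimum distance to DCI channels. -/
def CDCI (m k : ℕ) (N : Matrix (Fin m) (Fin m) ℂ →ₗ[ℂ] Matrix (Fin k) (Fin k) ℂ) : ℝ :=
  sInf {x : ℝ | ∃ K, IsChannel K ∧ (deph k ∘ₗ K = K ∘ₗ deph m) ∧
    x = f m k N K}


section Aux
set_option linter.unusedSectionVars false

variable {ι κ μ : Type} [Fintype ι] [DecidableEq ι] [Fintype κ] [Fintype μ]

lemma apply_eq_sum_choi (N : Matrix ι ι ℂ →ₗ[ℂ] Matrix κ κ ℂ) (ρ : Matrix ι ι ℂ) (k l : κ) :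
    N ρ k l = ∑ a : ι, ∑ b : ι, ρ a b * choi N (a, k) (b, l) := by
  conv_lhs => rw [Matrix.matrix_eq_sum_single ρ]
  rw [map_sum]
  simp only [Matrix.sum_apply]
  refine Finset.sum_congr rfl fun a _ => ?_
  rw [map_sum]
  simp only [Matrix.sum_apply]
  refine Finset.sum_congr rfl fun b _ => ?_
  have h : Matrix.single a b (ρ a b) = ρ a b • Matrix.single a b (1:ℂ) := by
    rw [Matrix.smul_single, smul_eq_mul, mul_one]
  rw [h, _root_.map_smul]
  simp [choi, smul_eq_mul]

lemma mul_std_mul (A : Matrix κ ι ℂ) (a b : ι) (k l : κ) :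
    (A * Matrix.single a b (1:ℂ) * Aᴴ) k l = A k a * star (A l b) := by
  rw [Matrix.mul_apply]
  simp only [Matrix.mul_apply, Matrix.single, Matrix.of_apply, conjTranspose_apply,
    ite_mul, one_mul, zero_mul, mul_ite, mul_zero]
  simp only [ite_and]
  rw [Finset.sum_eq_single b]
  · rw [Finset.sum_eq_single a] <;> simp +contextual [eq_comm]
  · intro c _ hc
    rw [Finset.sum_eq_zero] <;> simp +contextual [Ne.symm hc]
  · simp

lemma choi_psd_of_kraus {R : Type} [Fintype R] (A : R → Matrix κ ι ℂ)
    (N : Matrix ι ι ℂ →ₗ[ℂ] Matrix κ κ ℂ)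
    (h : ∀ ρ, N ρ = ∑ r, A r * ρ * (A r)ᴴ) : (choi N).PosSemidef := by
  have hchoi : choi N = (Matrix.of fun (r : R) (p : ι × κ) => (star (A r p.2 p.1) : ℂ))ᴴ *
      (Matrix.of fun (r : R) (p : ι × κ) => (star (A r p.2 p.1) : ℂ)) := by
    ext p q
    rw [Matrix.mul_apply]
    simp only [choi, Matrix.of_apply, conjTranspose_apply, h, Matrix.sum_apply, star_star]
    exact Finset.sum_congr rfl fun r _ => by rw [mul_std_mul]
  rw [hchoi]
  exact Matrix.posSemidef_conjTranspose_mul_self _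

lemma exists_kraus (N : Matrix ι ι ℂ →ₗ[ℂ] Matrix κ κ ℂ) (h : (choi N).PosSemidef) :
    ∃ A : (ι × κ) → Matrix κ ι ℂ, ∀ ρ, N ρ = ∑ r, A r * ρ * (A r)ᴴ := by
  obtain ⟨B, hB⟩ : ∃ B : Matrix (ι × κ) (ι × κ) ℂ, choi N = Bᴴ * B := by
    classical
    open scoped MatrixOrder in
    obtain ⟨B, hB⟩ := CStarAlgebra.nonneg_iff_eq_star_mul_self.mp h.nonneg
    exact ⟨B, hB⟩
  refine ⟨fun r => Matrix.of fun k i => star (B r (i, k)), fun ρ => ?_⟩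
  ext k l
  rw [apply_eq_sum_choi N ρ k l, Matrix.sum_apply]
  have : ∀ r, (Matrix.of (fun k i => star (B r (i, k))) * ρ *
      (Matrix.of fun k i => star (B r (i, k)))ᴴ) k l
      = ∑ a : ι, ∑ b : ι, ρ a b * (star (B r (a, k)) * B r (b, l)) := by
    intro r
    rw [Matrix.mul_apply]
    simp only [Matrix.mul_apply, conjTranspose_apply, Matrix.of_apply, star_star,
      Finset.sum_mul, Finset.mul_sum]
    rw [Finset.sum_comm]
    exact Finset.sum_congr rfl fun a _ => Finset.sum_congr rfl fun b _ => by ring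
  simp only [this]
  have key : ∀ a b : ι, ρ a b * choi N (a, k) (b, l)
      = ∑ r : ι × κ, ρ a b * (star (B r (a, k)) * B r (b, l)) := by
    intro a b
    rw [← Finset.mul_sum]
    congr 1
    rw [hB, Matrix.mul_apply]
    simp only [conjTranspose_apply]
  simp only [key]
  exact (Finset.sum_congr rfl fun a _ => Finset.sum_comm).trans Finset.sum_comm

lemma isChannel_comp [DecidableEq κ] {M : Matrix κ κ ℂ →ₗ[ℂ] Matrix μ μ ℂ}
    {N : Matrix ι ι ℂ →ₗ[ℂ] Matrix κ κ ℂ}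
    (hM : IsChannel M) (hN : IsChannel N) : IsChannel (M ∘ₗ N) := by
  obtain ⟨A, hA⟩ := exists_kraus N hN.1
  obtain ⟨B, hB⟩ := exists_kraus M hM.1
  constructor
  · refine choi_psd_of_kraus (fun sr : (κ × μ) × (ι × κ) => B sr.1 * A sr.2) _ fun ρ => ?_
    calc (M ∘ₗ N) ρ = ∑ s, B s * (∑ r, A r * ρ * (A r)ᴴ) * (B s)ᴴ := by
          rw [LinearMap.comp_apply, hA, hB]
      _ = ∑ s, ∑ r, (B s * A r) * ρ * (B s * A r)ᴴ := by
          refine Finset.sum_congr rfl fun s _ => ?_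
          rw [Matrix.mul_sum, Matrix.sum_mul]
          refine Finset.sum_congr rfl fun r _ => ?_
          simp only [conjTranspose_mul, Matrix.mul_assoc]
      _ = ∑ sr : (κ × μ) × (ι × κ), (B sr.1 * A sr.2) * ρ * (B sr.1 * A sr.2)ᴴ := by
          exact (Fintype.sum_prod_type (fun sr : (κ × μ) × (ι × κ) => (B sr.1 * A sr.2) * ρ * (B sr.1 * A sr.2)ᴴ)).symm
  · intro ρ
    rw [LinearMap.comp_apply, hM.2, hN.2]

lemma deph_kraus (d : ℕ) (ρ : Matrix (Fin d) (Fin d) ℂ) :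
    deph d ρ = ∑ i : Fin d, Matrix.single i i (1:ℂ) * ρ *
      (Matrix.single i i (1:ℂ))ᴴ := by
  have hct : ∀ i : Fin d, (Matrix.single i i (1:ℂ))ᴴ = Matrix.single i i 1 := by
    intro i
    ext a b
    by_cases h1 : a = i <;> by_cases h2 : b = i <;>
      simp_all [Matrix.conjTranspose_apply, Matrix.single, eq_comm]
  have hterm : ∀ (i k l : Fin d), (Matrix.single i i (1:ℂ) * ρ *
      Matrix.single i i (1:ℂ)) k l = if k = i ∧ l = i then ρ i i else 0 := by
    intro i k l
    by_cases hk : k = i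
    · subst hk
      by_cases hl : l = k
      · subst hl
        simp
      · simp [hl]
    · simp [Matrix.mul_assoc, hk]
  ext k l
  simp only [Matrix.sum_apply, hct, hterm]
  by_cases hkl : k = l
  · subst hkl
    rw [Finset.sum_eq_single k] <;> simp +contextual [deph, eq_comm]
  · rw [Finset.sum_eq_zero]
    · simp [deph, hkl]
    · intro i _
      have : ¬(k = i ∧ l = i) := fun ⟨h1, h2⟩ => hkl (h1.trans h2.symm)
      rw [if_neg this]

lemma isChannel_deph (d : ℕ) : IsChannel (deph d) := by
  constructor
  · exact choi_psd_of_kraus _ _ (deph_kraus d)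
  · intro ρ
    simp [deph, Matrix.trace]

lemma isChannel_id (d : ℕ) :
    IsChannel (LinearMap.id : Matrix (Fin d) (Fin d) ℂ →ₗ[ℂ] Matrix (Fin d) (Fin d) ℂ) := by
  constructor
  · refine choi_psd_of_kraus (fun _ : Unit => (1 : Matrix (Fin d) (Fin d) ℂ)) _ fun ρ => ?_
    simp
  · intro ρ; rfl

lemma deph_idem (d : ℕ) (ρ : Matrix (Fin d) (Fin d) ℂ) : deph d (deph d ρ) = deph d ρ := by
  ext i j
  by_cases h : i = j <;> simp [deph, h]

end Aux

/-- Monotonicity of the DI coherence measure under left composition with a DI channel. -/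
theorem CDI_mono_left (a b c : ℕ)
    (hf_nonneg : ∀ (m k : ℕ) X Y, 0 ≤ f m k X Y)
    -- weak monotonicity of `f` under pre- and post-composition with channels
    (hf_mono : ∀ (m k m' k' : ℕ)
      (U : Matrix (Fin m') (Fin m') ℂ →ₗ[ℂ] Matrix (Fin m) (Fin m) ℂ)
      (V : Matrix (Fin k) (Fin k) ℂ →ₗ[ℂ] Matrix (Fin k') (Fin k') ℂ)
      (N M : Matrix (Fin m) (Fin m) ℂ →ₗ[ℂ] Matrix (Fin k) (Fin k) ℂ),
      IsChannel U → IsChannel V → IsChannel N → IsChannel M →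
      f m' k' (V ∘ₗ N ∘ₗ U) (V ∘ₗ M ∘ₗ U) ≤ f m k N M)
    (N : Matrix (Fin a) (Fin a) ℂ →ₗ[ℂ] Matrix (Fin b) (Fin b) ℂ)
    (hN : IsChannel N)
    (Φ : Matrix (Fin b) (Fin b) ℂ →ₗ[ℂ] Matrix (Fin c) (Fin c) ℂ)
    (hΦ : IsChannel Φ)
    (hΦDI : deph c ∘ₗ Φ = deph c ∘ₗ Φ ∘ₗ deph b) :
    CDI f a c (Φ ∘ₗ N) ≤ CDI f a b N := by
  have hdd : ∀ (d : ℕ) (ρ : Matrix (Fin d) (Fin d) ℂ), deph d (deph d ρ) = deph d ρ := deph_idem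
  have hΦDI' : ∀ ρ, deph c (Φ ρ) = deph c (Φ (deph b ρ)) := fun ρ => by
    simpa using LinearMap.ext_iff.mp hΦDI ρ
  have hne : {x : ℝ | ∃ K, IsChannel K ∧ (deph b ∘ₗ K = deph b ∘ₗ K ∘ₗ deph a) ∧
      x = f a b (deph b ∘ₗ N) (deph b ∘ₗ K)}.Nonempty := by
    refine ⟨_, N ∘ₗ deph a, isChannel_comp hN (isChannel_deph a), ?_, rfl⟩
    refine LinearMap.ext fun ρ => ?_
    simp only [LinearMap.comp_apply, hdd]
  simp only [CDI]
  refine le_csInf hne ?_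
  rintro x ⟨K, hK, hKDI, rfl⟩
  have hKDI' : ∀ ρ, deph b (K ρ) = deph b (K (deph a ρ)) := fun ρ => by
    simpa using LinearMap.ext_iff.mp hKDI ρ
  have hbdd : BddBelow {x : ℝ | ∃ K, IsChannel K ∧ (deph c ∘ₗ K = deph c ∘ₗ K ∘ₗ deph a) ∧
      x = f a c (deph c ∘ₗ (Φ ∘ₗ N)) (deph c ∘ₗ K)} := by
    refine ⟨0, ?_⟩
    rintro y ⟨K', _, _, rfl⟩
    exact hf_nonneg _ _ _ _
  refine le_trans (csInf_le hbdd (a := f a c (deph c ∘ₗ (Φ ∘ₗ N)) (deph c ∘ₗ (Φ ∘ₗ K))) ?_) ?_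
  · refine ⟨Φ ∘ₗ K, isChannel_comp hΦ hK, ?_, rfl⟩
    refine LinearMap.ext fun ρ => ?_
    simp only [LinearMap.comp_apply]
    rw [hΦDI' (K ρ), hKDI' ρ, ← hΦDI']
  · have h1 : deph c ∘ₗ (Φ ∘ₗ N) = (deph c ∘ₗ Φ ∘ₗ deph b) ∘ₗ (deph b ∘ₗ N) ∘ₗ LinearMap.id := by
      refine LinearMap.ext fun ρ => ?_
      simp only [LinearMap.comp_apply, LinearMap.id_apply]
      rw [hdd, ← hΦDI']
    have h2 : deph c ∘ₗ (Φ ∘ₗ K) = (deph c ∘ₗ Φ ∘ₗ deph b) ∘ₗ (deph b ∘ₗ K) ∘ₗ LinearMap.id := by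
      refine LinearMap.ext fun ρ => ?_
      simp only [LinearMap.comp_apply, LinearMap.id_apply]
      rw [hdd, ← hΦDI']
    rw [h1, h2]
    exact hf_mono a b a c LinearMap.id (deph c ∘ₗ Φ ∘ₗ deph b) (deph b ∘ₗ N) (deph b ∘ₗ K)
      (isChannel_id a)
      (isChannel_comp (isChannel_deph c) (isChannel_comp hΦ (isChannel_deph b)))
      (isChannel_comp (isChannel_deph b) hN) (isChannel_comp (isChannel_deph b) hK)

end
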